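/- Let {B_{a|x}} be a measurement assemblage, E a positive linear map, and ρ a density matrix with p = tr[E(ρ)] > 0. Then SR( E(ρ^{1/2} B ρ^{1/2}) / p ) ≤ IR(B). -/

import Mathlib

open Matrix Kronecker BigOperators ComplexOrder

noncomputable section

/-- A density matrix: positive semidefinite with unit trace. -/
def IsDensity {d : ℕ} (ρ : Matrix (Fin d) (Fin d) ℂ) : Prop :=
  ρ.PosSemidef ∧ ρ.trace = 1

/-- A POVM: positive semidefinite effects summing to the identity. -/
def IsPOVM {d nl : ℕ} (G : Fin nl → Matrix (Fin d) (Fin d) ℂ) : Prop :=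
  (∀ l, (G l).PosSemidef) ∧ ∑ l, G l = 1

/-- A measurement assemblage: for each setting `x`, a POVM `a ↦ M x a`. -/
def IsMA {d na nx : ℕ} (M : Fin nx → Fin na → Matrix (Fin d) (Fin d) ℂ) : Prop :=
  (∀ x a, (M x a).PosSemidef) ∧ ∀ x, ∑ a, M x a = 1

/-- Joint measurability: `M x a = ∑ λ p(a|x,λ) G λ` for a parent POVM `G`. -/
def JM {d na nx : ℕ} (M : Fin nx → Fin na → Matrix (Fin d) (Fin d) ℂ) : Prop :=
  ∃ (nl : ℕ) (G : Fin nl → Matrix (Fin d) (Fin d) ℂ)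
    (p : Fin nx → Fin na → Fin nl → ℝ),
    IsPOVM G ∧ (∀ x a l, 0 ≤ p x a l) ∧ (∀ x l, ∑ a, p x a l = 1) ∧
    ∀ x a, M x a = ∑ l, (p x a l : ℂ) • G l

/-- A state assemblage: PSD elements with an `x`-independent reduced density matrix. -/
def IsSA {d na nx : ℕ} (σ : Fin nx → Fin na → Matrix (Fin d) (Fin d) ℂ) : Prop :=
  (∀ x a, (σ x a).PosSemidef) ∧
  ∃ ρ : Matrix (Fin d) (Fin d) ℂ, IsDensity ρ ∧ ∀ x, ∑ a, σ x a = ρ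

/-- Local-hidden-state model: `σ x a = ∑ λ q(λ) p(a|x,λ) ρ_λ`. -/
def LHS {d na nx : ℕ} (σ : Fin nx → Fin na → Matrix (Fin d) (Fin d) ℂ) : Prop :=
  ∃ (nl : ℕ) (q : Fin nl → ℝ) (p : Fin nx → Fin na → Fin nl → ℝ)
    (ρ : Fin nl → Matrix (Fin d) (Fin d) ℂ),
    (∀ l, 0 ≤ q l) ∧ (∑ l, q l = 1) ∧
    (∀ x a l, 0 ≤ p x a l) ∧ (∀ x l, ∑ a, p x a l = 1) ∧
    (∀ l, IsDensity (ρ l)) ∧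
    ∀ x a, σ x a = ∑ l, ((q l * p x a l : ℝ) : ℂ) • ρ l

/-- Incompatibility robustness. -/
def IR {d na nx : ℕ} (B : Fin nx → Fin na → Matrix (Fin d) (Fin d) ℂ) : ℝ :=
  sInf {t : ℝ | 0 ≤ t ∧ ∃ N, IsMA N ∧
    JM (fun x a => (((1 + t : ℝ))⁻¹ : ℂ) • (B x a + (t : ℂ) • N x a))}

/-- Steering robustness. -/
def SR {d na nx : ℕ} (σ : Fin nx → Fin na → Matrix (Fin d) (Fin d) ℂ) : ℝ :=
  sInf {t : ℝ | 0 ≤ t ∧ ∃ ξ, IsSA ξ ∧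
    LHS (fun x a => (((1 + t : ℝ))⁻¹ : ℂ) • (σ x a + (t : ℂ) • ξ x a))}

/-- Incompatible weight. -/
def IW {d na nx : ℕ} (B : Fin nx → Fin na → Matrix (Fin d) (Fin d) ℂ) : ℝ :=
  sInf {t : ℝ | 0 ≤ t ∧ t ≤ 1 ∧ ∃ N O, IsMA N ∧ JM O ∧
    ∀ x a, B x a = (t : ℂ) • N x a + ((1 - t : ℝ) : ℂ) • O x a}

/-- Steerable weight. -/
def SW {d na nx : ℕ} (σ : Fin nx → Fin na → Matrix (Fin d) (Fin d) ℂ) : ℝ :=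
  sInf {t : ℝ | 0 ≤ t ∧ t ≤ 1 ∧ ∃ ξ τ, IsSA ξ ∧ LHS τ ∧
    ∀ x a, σ x a = (t : ℂ) • ξ x a + ((1 - t : ℝ) : ℂ) • τ x a}

/-- Positive map on matrices. -/
def PosMap {d : ℕ} (E : Matrix (Fin d) (Fin d) ℂ →ₗ[ℂ] Matrix (Fin d) (Fin d) ℂ) : Prop :=
  ∀ X, X.PosSemidef → (E X).PosSemidef

/-- Trace-nonincreasing on PSD matrices. -/
def TNI {d : ℕ} (E : Matrix (Fin d) (Fin d) ℂ →ₗ[ℂ] Matrix (Fin d) (Fin d) ℂ) : Prop :=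
  ∀ X : Matrix (Fin d) (Fin d) ℂ, X.PosSemidef → (E X).trace.re ≤ X.trace.re

/-- `Ed` is the Hilbert–Schmidt adjoint of `E`. -/
def IsAdjoint {d : ℕ} (E Ed : Matrix (Fin d) (Fin d) ℂ →ₗ[ℂ] Matrix (Fin d) (Fin d) ℂ) : Prop :=
  ∀ X Y, ((E X)ᴴ * Y).trace = (Xᴴ * (Ed Y)).trace

/-- Partial trace over the first tensor factor. -/
def ptraceA {d d' : ℕ} (M : Matrix (Fin d × Fin d') (Fin d × Fin d') ℂ) :
    Matrix (Fin d') (Fin d') ℂ :=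
  Matrix.of fun i j => ∑ k : Fin d, M (k, i) (k, j)

/-- The map `E ⊗ id` acting on bipartite matrices. -/
def tensId {d d' : ℕ} (E : Matrix (Fin d) (Fin d) ℂ →ₗ[ℂ] Matrix (Fin d) (Fin d) ℂ)
    (M : Matrix (Fin d × Fin d') (Fin d × Fin d') ℂ) :
    Matrix (Fin d × Fin d') (Fin d × Fin d') ℂ :=
  Matrix.of fun p q => E (Matrix.of fun i k => M (i, p.2) (k, q.2)) p.1 q.1

/-- Square root of a PSD matrix, as `Matrix.PosSemidef.sqrt` was defined in older Mathlib. -/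
def Matrix.PosSemidef.sqrt {n : Type*} [Fintype n] [DecidableEq n] {A : Matrix n n ℂ}
    (hA : A.PosSemidef) : Matrix n n ℂ :=
  hA.1.eigenvectorUnitary.1 * diagonal ((↑) ∘ Real.sqrt ∘ hA.1.eigenvalues) *
    (star hA.1.eigenvectorUnitary : Matrix n n ℂ)

/-! The filter `L X = E(√ρ X √ρ) / p` is a positive linear map with `L 1 = E ρ / p` a state. It
sends a measurement assemblage to a state assemblage with reduced state `L 1`, and a jointly
measurable assemblage with parent POVM `G` to an LHS model with weights `q λ = tr L(G λ)` and hidden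
states `L(G λ) / q λ`. Applying `L` to any feasible decomposition for `IR B` therefore gives a
feasible decomposition for the steering robustness with the same `t`. -/

namespace Matrix.PosSemidef

variable {n : Type*} [Fintype n] {A : Matrix n n ℂ}

lemma trace_eq_ofReal_re (hA : A.PosSemidef) : A.trace = (A.trace.re : ℂ) :=
  Complex.eq_re_of_ofReal_le (r := 0) (by simpa using hA.trace_nonneg)

variable [DecidableEq n]

lemma posSemidef_sqrt (hA : A.PosSemidef) : hA.sqrt.PosSemidef := by
  have hD : (diagonal ((↑) ∘ Real.sqrt ∘ hA.1.eigenvalues) : Matrix n n ℂ).PosSemidef :=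
    posSemidef_diagonal_iff.mpr fun _ => Complex.zero_le_real.mpr (Real.sqrt_nonneg _)
  simpa [Matrix.PosSemidef.sqrt, star_eq_conjTranspose] using
    hD.mul_mul_conjTranspose_same (hA.1.eigenvectorUnitary : Matrix n n ℂ)

lemma sqrt_mul_self (hA : A.PosSemidef) : hA.sqrt * hA.sqrt = A := by
  set U : Matrix n n ℂ := (hA.1.eigenvectorUnitary : Matrix n n ℂ)
  set D : Matrix n n ℂ := diagonal ((↑) ∘ Real.sqrt ∘ hA.1.eigenvalues)
  have hU : star U * U = 1 := Unitary.star_mul_self_of_mem hA.1.eigenvectorUnitary.2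
  have hDD : D * D = diagonal (RCLike.ofReal ∘ hA.1.eigenvalues) := by
    rw [diagonal_mul_diagonal]
    congr 1
    funext i
    simp [← Complex.ofReal_mul, Real.mul_self_sqrt (hA.eigenvalues_nonneg i)]
  calc hA.sqrt * hA.sqrt = U * (D * (star U * U) * D) * star U := by
        simp only [Matrix.PosSemidef.sqrt, U, D, Matrix.mul_assoc]
    _ = A := by
        rw [hU, Matrix.mul_one, hDD]
        conv_rhs => rw [hA.1.spectral_theorem, Unitary.conjStarAlgAut_apply]

end Matrix.PosSemidef

variable {d na nx : ℕ}

lemma IsDensity.exists_eq_trace_smul {σ A : Matrix (Fin d) (Fin d) ℂ} (hσ : IsDensity σ)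
    (hA : A.PosSemidef) : ∃ τ, IsDensity τ ∧ A = (A.trace.re : ℂ) • τ := by
  by_cases h : A.trace.re = 0
  · refine ⟨σ, hσ, ?_⟩
    rw [h, Complex.ofReal_zero, zero_smul, ← hA.trace_eq_zero_iff, hA.trace_eq_ofReal_re, h,
      Complex.ofReal_zero]
  · have h' : (A.trace.re : ℂ) ≠ 0 := Complex.ofReal_ne_zero.mpr h
    refine ⟨(A.trace.re : ℂ)⁻¹ • A, ⟨hA.smul ?_, ?_⟩,
      by rw [smul_smul, mul_inv_cancel₀ h', one_smul]⟩
    · rw [← Complex.ofReal_inv]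
      exact Complex.zero_le_real.mpr (inv_nonneg.mpr (Complex.nonneg_iff.mp hA.trace_nonneg).1)
    · rw [trace_smul, smul_eq_mul, ← hA.trace_eq_ofReal_re]
      exact inv_mul_cancel₀ (hA.trace_eq_ofReal_re ▸ h')

section PositiveMap

variable {L : Matrix (Fin d) (Fin d) ℂ →ₗ[ℂ] Matrix (Fin d) (Fin d) ℂ}

lemma IsMA.isSA_map {N : Fin nx → Fin na → Matrix (Fin d) (Fin d) ℂ} (hN : IsMA N)
    (hL : PosMap L) (hL1 : IsDensity (L 1)) : IsSA fun x a => L (N x a) :=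
  ⟨fun x a => hL _ (hN.1 x a), L 1, hL1, fun x => by rw [← map_sum, hN.2 x]⟩

lemma JM.lhs_map {M : Fin nx → Fin na → Matrix (Fin d) (Fin d) ℂ} (hM : JM M)
    (hL : PosMap L) (hL1 : IsDensity (L 1)) : LHS fun x a => L (M x a) := by
  obtain ⟨nl, G, p, hG, hp0, hp1, hMG⟩ := hM
  have hLG : ∀ l, (L (G l)).PosSemidef := fun l => hL _ (hG.1 l)
  choose τ hτ hLGτ using fun l => hL1.exists_eq_trace_smul (hLG l)
  refine ⟨nl, fun l => (L (G l)).trace.re, p, τ,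
    fun l => (Complex.nonneg_iff.mp (hLG l).trace_nonneg).1, ?_, hp0, hp1, hτ, ?_⟩
  · have h : ∑ l, (L (G l)).trace = 1 := by rw [← trace_sum, ← map_sum, hG.2, hL1.2]
    simpa using congrArg Complex.re h
  · intro x a
    dsimp only
    rw [hMG x a, map_sum]
    refine Finset.sum_congr rfl fun l _ => ?_
    conv_lhs => rw [map_smul, hLGτ l, smul_smul]
    rw [Complex.ofReal_mul, mul_comm]

end PositiveMap

lemma JM.of_smul_one (p : Fin nx → Fin na → ℝ) (hp0 : ∀ x a, 0 ≤ p x a)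
    (hp1 : ∀ x, ∑ a, p x a = 1) :
    JM fun x a => ((p x a : ℂ) • 1 : Matrix (Fin d) (Fin d) ℂ) :=
  ⟨1, fun _ => 1, fun x a _ => p x a, ⟨fun _ => PosSemidef.one, by simp⟩,
    fun x a _ => hp0 x a, fun x _ => hp1 x, fun x a => by simp⟩

lemma IsMA.one_sub_posSemidef {B : Fin nx → Fin na → Matrix (Fin d) (Fin d) ℂ} (hB : IsMA B)
    (x : Fin nx) (a : Fin na) : (1 - B x a).PosSemidef := by
  rw [← hB.2 x, ← Finset.sum_erase_eq_sub (Finset.mem_univ a)]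
  exact posSemidef_sum _ fun a' _ => hB.1 x a'

-- The feasible set of `IR B` is nonempty, so `IR B` is not the junk value `sInf ∅ = 0`: mixing
-- `B` with the noise `N = (1 - B) / na + 1 / na²` at weight `t = na` gives the trivial
-- assemblage `1 / na`.
lemma IsMA.exists_jm_mixture [NeZero d] {B : Fin nx → Fin na → Matrix (Fin d) (Fin d) ℂ}
    (hB : IsMA B) : ∃ t : ℝ, 0 ≤ t ∧ ∃ N, IsMA N ∧
      JM (fun x a => (((1 + t : ℝ))⁻¹ : ℂ) • (B x a + (t : ℂ) • N x a)) := by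
  have hna : ∀ _ : Fin nx, na ≠ 0 := by
    rintro x rfl
    exact zero_ne_one (α := Matrix (Fin d) (Fin d) ℂ) (by simpa using hB.2 x)
  set c : ℝ := (na : ℝ)⁻¹
  have hc : (0 : ℂ) ≤ (c : ℂ) := Complex.zero_le_real.mpr (by positivity)
  refine ⟨na, Nat.cast_nonneg na, fun x a => (c : ℂ) • (1 - B x a) + (c : ℂ) • (c : ℂ) • 1,
    ⟨fun x a => ?_, fun x => ?_⟩, ?_⟩
  · exact ((hB.one_sub_posSemidef x a).smul hc).add ((PosSemidef.one.smul hc).smul hc)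
  · simp only [Finset.sum_add_distrib, ← Finset.smul_sum, Finset.sum_sub_distrib, hB.2 x,
      Finset.sum_const, Finset.card_univ, Fintype.card_fin, c]
    match_scalars
    field_simp [hna x]
    ring
  · convert JM.of_smul_one (fun (_ : Fin nx) (_ : Fin na) => c) (fun _ _ => by positivity)
      (fun x => by simp [c, hna x]) using 3 with x a
    simp only [c]
    push_cast
    match_scalars <;> field_simp [hna x] <;> ring

theorem SR_map_le_IR {L : Matrix (Fin d) (Fin d) ℂ →ₗ[ℂ] Matrix (Fin d) (Fin d) ℂ}
    (hL : PosMap L) (hL1 : IsDensity (L 1)) {B : Fin nx → Fin na → Matrix (Fin d) (Fin d) ℂ}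
    (hB : IsMA B) : SR (fun x a => L (B x a)) ≤ IR B := by
  have : NeZero d := ⟨by rintro rfl; simpa using hL1.2⟩
  refine csInf_le_csInf ⟨0, fun t ht => ht.1⟩ hB.exists_jm_mixture ?_
  rintro t ⟨ht, N, hN, hJM⟩
  refine ⟨ht, fun x a => L (N x a), hN.isSA_map hL hL1, ?_⟩
  simpa only [map_smul, map_add] using hJM.lhs_map hL hL1

theorem sr_filtered_schrodinger_le_ir_general {d na nx : ℕ}
    (B : Fin nx → Fin na → Matrix (Fin d) (Fin d) ℂ) (hB : IsMA B)
    (E : Matrix (Fin d) (Fin d) ℂ →ₗ[ℂ] Matrix (Fin d) (Fin d) ℂ) (hE : PosMap E)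
    (ρ : Matrix (Fin d) (Fin d) ℂ) (hρ : ρ.PosSemidef)
    (hp : 0 < (E ρ).trace.re) :
    SR (fun x a => ((((E ρ).trace.re)⁻¹ : ℝ) : ℂ) •
        E (hρ.sqrt * B x a * hρ.sqrt)) ≤ IR B := by
  set S := hρ.sqrt
  set p := (E ρ).trace.re
  let L := ((p⁻¹ : ℝ) : ℂ) • E ∘ₗ (LinearMap.mulRight ℂ S ∘ₗ LinearMap.mulLeft ℂ S)
  have hS : Sᴴ = S := hρ.posSemidef_sqrt.1.eq
  have hL : PosMap L := fun X hX => by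
    have := (hE _ (hX.mul_mul_conjTranspose_same S)).smul
      (Complex.zero_le_real.mpr (inv_nonneg.mpr hp.le))
    simpa [L, hS] using this
  have hL1 : IsDensity (L 1) := by
    have hL_one : L 1 = ((p⁻¹ : ℝ) : ℂ) • E ρ := by simp [L, S, hρ.sqrt_mul_self]
    refine ⟨hL 1 PosSemidef.one, ?_⟩
    rw [hL_one, trace_smul, (hE ρ hρ).trace_eq_ofReal_re, smul_eq_mul, ← Complex.ofReal_mul,
      inv_mul_cancel₀ hp.ne', Complex.ofReal_one]
  exact SR_map_le_IR hL hL1 hB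

/-- SR(E(ρ^{1/2} B ρ^{1/2})/p) ≤ IR(B) for a positive map E. -/
theorem sr_filtered_schrodinger_le_ir {d na nx : ℕ}
    (B : Fin nx → Fin na → Matrix (Fin d) (Fin d) ℂ) (hB : IsMA B)
    (E : Matrix (Fin d) (Fin d) ℂ →ₗ[ℂ] Matrix (Fin d) (Fin d) ℂ) (hE : PosMap E)
    (ρ : Matrix (Fin d) (Fin d) ℂ) (hρ : ρ.PosSemidef) (hρ1 : ρ.trace = 1)
    (hp : 0 < (E ρ).trace.re) :
    SR (fun x a => ((((E ρ).trace.re)⁻¹ : ℝ) : ℂ) •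
        E (hρ.sqrt * B x a * hρ.sqrt)) ≤ IR B :=
  sr_filtered_schrodinger_le_ir_general B hB E hE ρ hρ hp
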